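/- arXiv:1805.12172 — 2 statements merged into one kernel-verified Lean document; each statement's English description precedes it below -/
import Mathlib

section
/- In the majority model on a Δ-regular graph G with n vertices and second eigenvalue λ, if the set of blue vertices at time t has size at most (1/2 − 2λ/Δ)·n, then the set of blue vertices at time t+1 has size at most n/4. -/
open Finset

variable {V : Type*} [Fintype V] [DecidableEq V]

/-- One round of the majority model: a vertex adopts the strict majority color among its
neighbors (`true` = blue, `false` = red) and keeps its current color in case of a tie. -/
def majStep (G : SimpleGraph V) [DecidableRel G.Adj] (C : V → Bool) : V → Bool :=
  fun v =>
    let b := ((G.neighborFinset v).filter fun u => C u = true).card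
    let r := ((G.neighborFinset v).filter fun u => C u = false).card
    if r < b then true else if b < r then false else C v

/-- The set of blue vertices of a configuration. -/
def blueSet (C : V → Bool) : Finset V := univ.filter fun v => C v = true

/-- `epairs G S S'` is the number of ordered pairs `(v,u)` with `v ∈ S`, `u ∈ S'`, `{v,u} ∈ E`. -/
def epairs (G : SimpleGraph V) [DecidableRel G.Adj] (S S' : Finset V) : ℕ :=
  ((S ×ˢ S').filter fun q => G.Adj q.1 q.2).card

lemma epairs_eq_sum (G : SimpleGraph V) [DecidableRel G.Adj] (S S' : Finset V) :
    epairs G S S' = ∑ v ∈ S, (S'.filter (G.Adj v)).card := by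
  unfold epairs
  rw [Finset.card_filter, Finset.sum_product]
  exact Finset.sum_congr rfl fun v _ => (Finset.card_filter _ _).symm

lemma blue_deg (G : SimpleGraph V) [DecidableRel G.Adj] (C : V → Bool) (v : V) :
    ((blueSet C).filter (G.Adj v)).card
      = ((G.neighborFinset v).filter fun u => C u = true).card := by
  congr 1
  ext u
  simp [blueSet, SimpleGraph.mem_neighborFinset, and_comm]

lemma key_count (G : SimpleGraph V) [DecidableRel G.Adj] (Δ : ℕ)
    (hreg : G.IsRegularOfDegree Δ) (C : V → Bool) :
    Δ * (blueSet (majStep G C)).card ≤ 2 * epairs G (blueSet (majStep G C)) (blueSet C) := by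
  rw [epairs_eq_sum, Finset.mul_sum]
  have h1 : Δ * (blueSet (majStep G C)).card = ∑ _v ∈ blueSet (majStep G C), Δ := by
    rw [Finset.sum_const, smul_eq_mul, mul_comm]
  rw [h1]
  apply Finset.sum_le_sum
  intro v hv
  rw [blue_deg]
  have hmem : majStep G C v = true := by
    simpa [blueSet] using hv
  set β := ((G.neighborFinset v).filter fun u => C u = true).card with hβ
  set ρ := ((G.neighborFinset v).filter fun u => C u = false).card with hρ
  have hsum : β + ρ = Δ := by
    have h2 := Finset.card_filter_add_card_filter_not
      (s := G.neighborFinset v) (p := fun u => C u = true)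
    have heq : ((G.neighborFinset v).filter fun u => ¬ C u = true)
        = (G.neighborFinset v).filter fun u => C u = false := by
      simp [Bool.not_eq_true]
    rw [heq] at h2
    rw [hβ, hρ, h2, G.card_neighborFinset_eq_degree, hreg v]
  have : ρ ≤ β := by
    simp only [majStep] at hmem
    by_cases h1 : ρ < β
    · omega
    · rw [if_neg h1] at hmem
      by_cases h2 : β < ρ
      · rw [if_pos h2] at hmem
        exact Bool.noConfusion hmem
      · omega
  omega

set_option maxHeartbeats 1600000 in
theorem stmt1 (G : SimpleGraph V) [DecidableRel G.Adj] (Δ : ℕ) (hΔ : 0 < Δ)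
    (hreg : G.IsRegularOfDegree Δ) (lam : ℝ) (hlam0 : 0 ≤ lam)
    (hmix : ∀ S S' : Finset V,
      |(epairs G S S' : ℝ) - S.card * S'.card * Δ / Fintype.card V| ≤
        lam * Real.sqrt (S.card * S'.card))
    (C : V → Bool)
    (hB : ((blueSet C).card : ℝ) ≤ (1/2 - 2*lam/Δ) * Fintype.card V) :
    ((blueSet (majStep G C)).card : ℝ) ≤ (Fintype.card V : ℝ) / 4 := by
  rcases Nat.eq_zero_or_pos (Fintype.card V) with hn0 | hnpos
  · have h0 : (blueSet (majStep G C)).card = 0 := by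
      have := Finset.card_le_univ (blueSet (majStep G C))
      omega
    rw [h0]
    simp [hn0]
  have hnR : (0:ℝ) < Fintype.card V := by exact_mod_cast hnpos
  have hΔR : (0:ℝ) < Δ := by exact_mod_cast hΔ
  rcases eq_or_lt_of_le hlam0 with hlz | hlpos
  · -- lam = 0 leads to contradiction via a singleton
    exfalso
    obtain ⟨v⟩ := Fintype.card_pos_iff.mp hnpos
    have h := hmix {v} {v}
    have he : epairs G {v} {v} = 0 := by
      unfold epairs
      rw [Finset.singleton_product_singleton, Finset.filter_singleton]
      simp
    rw [he, ← hlz] at h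
    simp at h
    have hd : (Δ:ℝ)/(Fintype.card V) ≤ 0 := by
      have habs : |(0:ℝ) - (Δ:ℝ)/(Fintype.card V)| ≤ 0 := by simpa using h
      have := neg_abs_le ((0:ℝ) - (Δ:ℝ)/(Fintype.card V))
      have := le_abs_self ((0:ℝ) - (Δ:ℝ)/(Fintype.card V))
      linarith [abs_nonneg ((0:ℝ) - (Δ:ℝ)/(Fintype.card V))]
    nlinarith [div_pos hΔR hnR]
  -- main case: lam > 0
  have hcount := key_count G Δ hreg C
  have h1 : (Δ:ℝ) * (blueSet (majStep G C)).card ≤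
      2 * (epairs G (blueSet (majStep G C)) (blueSet C) : ℝ) := by exact_mod_cast hcount
  have h2 := hmix (blueSet (majStep G C)) (blueSet C)
  have hble : ((blueSet C).card : ℝ) ≤ Fintype.card V := by
    exact_mod_cast Finset.card_le_univ (blueSet C)
  -- abstract everything into real variables
  set nR : ℝ := (Fintype.card V : ℝ) with hnd
  set x : ℝ := ((blueSet (majStep G C)).card : ℝ) with hxd
  set y : ℝ := ((blueSet C).card : ℝ) with hyd
  set e : ℝ := (epairs G (blueSet (majStep G C)) (blueSet C) : ℝ) with hed
  have hx0 : 0 ≤ x := by rw [hxd]; positivity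
  have hy0 : 0 ≤ y := by rw [hyd]; positivity
  clear_value nR x y e
  clear hmix hcount
  have h2' : e ≤ x * y * Δ / nR + lam * Real.sqrt (x * y) := by
    have := (abs_le.mp h2).2
    linarith
  have h3 : Real.sqrt (x * y) ≤ Real.sqrt (x * nR) :=
    Real.sqrt_le_sqrt (by nlinarith)
  set s : ℝ := Real.sqrt (x * nR) with hs
  have hs0 : 0 ≤ s := Real.sqrt_nonneg _
  have hs2 : s ^ 2 = x * nR := Real.sq_sqrt (by positivity)
  have h4 : (Δ:ℝ) * x ≤ 2 * (x * y * Δ / nR) + 2 * lam * s := by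
    nlinarith [mul_le_mul_of_nonneg_left h3 (le_of_lt hlpos)]
  have h5 : (Δ:ℝ) * x * nR ≤ 2 * (x * y * Δ) + 2 * lam * s * nR := by
    have hm := mul_le_mul_of_nonneg_right h4 (le_of_lt hnR)
    have hq : (2 * (x * y * Δ / nR) + 2 * lam * s) * nR
        = 2 * (x * y * Δ) + 2 * lam * s * nR := by
      field_simp
    nlinarith
  have h6 : 2 * (x * y * Δ) ≤ (Δ:ℝ) * x * nR - 4 * lam * x * nR := by
    have hstep : (1/2 - 2*lam/Δ) * nR * (2 * x * Δ) = Δ * x * nR - 4 * lam * x * nR := by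
      field_simp
      ring
    nlinarith [mul_le_mul_of_nonneg_right hB (by positivity : (0:ℝ) ≤ 2 * x * Δ)]
  have h7 : 2 * x ≤ s := by
    have h8 : 4 * lam * x * nR ≤ 2 * lam * s * nR := by linarith
    have hpos : 0 < 2 * (lam * nR) := by positivity
    by_contra hcon
    push_neg at hcon
    have hprod : 0 < (2 * x - s) * (2 * (lam * nR)) := mul_pos (by linarith) hpos
    nlinarith
  nlinarith [sq_nonneg x]
end

section
/- In the majority model on a Δ-regular graph G with n vertices and second eigenvalue λ, if the set of blue vertices at time t has size at most n/4, then the set of blue vertices at time t+1 has size at most 16·(λ/Δ)²·|B(t)|. -/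
open Finset

variable {V : Type*} [Fintype V] [DecidableEq V]

/-- `S` controls `S'`: whenever all of `S` is blue in some configuration, all of `S'`
is blue in the next configuration. -/
def controls (G : SimpleGraph V) [DecidableRel G.Adj] (S S' : Finset V) : Prop :=
  ∀ C : V → Bool, (∀ v ∈ S, C v = true) → ∀ v ∈ S', majStep G C v = true

private lemma real_arith (x bb n D lam E : ℝ) (hbb0 : 0 ≤ bb)
    (hD : 0 < D) (hlam0 : 0 ≤ lam) (hnpos : 0 < n) (hxpos : 0 < x) (hB : bb ≤ n / 4)
    (hEup : E ≤ x * bb * D / n + lam * Real.sqrt (x * bb)) (hElow : x * D ≤ 2 * E) :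
    x ≤ 16 * (lam / D) ^ 2 * bb := by
  have hx0 : 0 ≤ x := hxpos.le
  have hfrac : x * bb * D / n ≤ x * D / 4 := by
    rw [div_le_div_iff₀ hnpos (by norm_num : (0:ℝ) < 4)]
    nlinarith [mul_nonneg hx0 hD.le]
  have hkey : x * D ≤ 4 * (lam * Real.sqrt (x * bb)) := by linarith
  have hsq : (x * D) ^ 2 ≤ (4 * (lam * Real.sqrt (x * bb))) ^ 2 :=
    pow_le_pow_left₀ (by positivity) hkey 2
  have hsqrt : (Real.sqrt (x * bb)) ^ 2 = x * bb := Real.sq_sqrt (by positivity)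
  have hsq2 : x ^ 2 * D ^ 2 ≤ 16 * lam ^ 2 * (x * bb) := by nlinarith [hsq, hsqrt]
  have h1 : x * D ^ 2 ≤ 16 * lam ^ 2 * bb := by nlinarith
  have heq : 16 * (lam / D) ^ 2 * bb = 16 * lam ^ 2 * bb / D ^ 2 := by
    field_simp
  rw [heq, le_div_iff₀ (by positivity)]
  linarith

theorem stmt2 (G : SimpleGraph V) [DecidableRel G.Adj] (Δ : ℕ) (hΔ : 0 < Δ)
    (hreg : G.IsRegularOfDegree Δ) (lam : ℝ) (hlam0 : 0 ≤ lam)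
    (hmix : ∀ S S' : Finset V,
      |(epairs G S S' : ℝ) - S.card * S'.card * Δ / Fintype.card V| ≤
        lam * Real.sqrt (S.card * S'.card))
    (C : V → Bool)
    (hB : ((blueSet C).card : ℝ) ≤ (Fintype.card V : ℝ) / 4) :
    ((blueSet (majStep G C)).card : ℝ) ≤ 16 * (lam / Δ)^2 * (blueSet C).card := by
  classical
  set B : Finset V := blueSet C with hBdef
  set B' : Finset V := blueSet (majStep G C) with hB'def
  -- per-vertex: each blue-next vertex has at least Δ/2 blue neighbors
  have hper : ∀ v ∈ B', Δ ≤ 2 * (B.filter (G.Adj v)).card := by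
    intro v hv
    have hvtrue : majStep G C v = true := by
      rw [hB'def, blueSet, mem_filter] at hv; exact hv.2
    set b := ((G.neighborFinset v).filter fun u => C u = true).card with hb
    set r := ((G.neighborFinset v).filter fun u => C u = false).card with hr
    have hbr : b + r = Δ := by
      have h2 : ((G.neighborFinset v).filter fun u => C u = false)
          = ((G.neighborFinset v).filter fun u => ¬ (C u = true)) := by
        apply filter_congr; intro u _; simp
      rw [hb, hr, h2, Finset.card_filter_add_card_filter_not]
      exact hreg v
    have hrb : r ≤ b := by
      unfold majStep at hvtrue
      simp only at hvtrue
      by_contra hlt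
      push_neg at hlt
      rw [if_neg (by omega), if_pos hlt] at hvtrue
      exact Bool.false_ne_true hvtrue
    have hfil : B.filter (G.Adj v) = (G.neighborFinset v).filter fun u => C u = true := by
      ext u
      simp [hBdef, blueSet, SimpleGraph.mem_neighborFinset, and_comm]
    rw [hfil, ← hb]
    omega
  -- counting: |B'| * Δ ≤ 2 * epairs G B' B
  have hsum : epairs G B' B = ∑ v ∈ B', (B.filter (G.Adj v)).card := by
    unfold epairs
    rw [Finset.card_filter, Finset.sum_product]
    exact Finset.sum_congr rfl fun v _ => (Finset.card_filter _ _).symm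
  have hcount : B'.card * Δ ≤ 2 * epairs G B' B := by
    rw [hsum, Finset.mul_sum]
    calc B'.card * Δ = ∑ _v ∈ B', Δ := by rw [Finset.sum_const, smul_eq_mul]
    _ ≤ ∑ v ∈ B', 2 * (B.filter (G.Adj v)).card := Finset.sum_le_sum hper
  -- pass to reals
  have hx0 : (0:ℝ) ≤ (B'.card : ℝ) := by positivity
  rcases eq_or_lt_of_le hx0 with hxz | hxpos
  · rw [← hxz]; positivity
  have hnpos : (0:ℝ) < (Fintype.card V : ℝ) := by
    have hc : B'.card ≤ Fintype.card V := Finset.card_le_card (subset_univ _)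
    have h1 : 0 < B'.card := by exact_mod_cast hxpos
    exact_mod_cast lt_of_lt_of_le h1 hc
  have hE := hmix B' B
  have hEup : (epairs G B' B : ℝ) ≤
      (B'.card : ℝ) * (B.card : ℝ) * Δ / (Fintype.card V : ℝ)
        + lam * Real.sqrt ((B'.card : ℝ) * (B.card : ℝ)) := by
    have := (abs_le.mp hE).2
    linarith
  have hElow : (B'.card : ℝ) * (Δ:ℝ) ≤ 2 * (epairs G B' B : ℝ) := by exact_mod_cast hcount
  exact real_arith (B'.card) (B.card) (Fintype.card V) Δ lam (epairs G B' B)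
    (by positivity) (by exact_mod_cast hΔ) hlam0 hnpos hxpos hB hEup hElow
end
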